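/- Let (A,R) be a unital Rota–Baxter algebra of weight θ, R̃ := θ·Id − R, x ∈ A, and let f, h ∈ A[[λ]] be the unique solutions of f = 1 + λR(f·x) and h = 1 + λR̃(x·h). Then f is invertible in A[[λ]] with inverse f⁻¹ = 1 − λR(x·h), i.e., f·(1 − λR(x·h)) = 1 = (1 − λR(x·h))·f. -/

import Mathlib

/-!
Put `a = R(f x)` and `b = R(x h)`. Expanding `a b` by the Rota–Baxter identity and substituting
the two fixed-point equations for `f x` and `x h` gives `a - b = λ a b`, which is
exactly `(1 + λ a)(1 - λ b) = 1`, i.e. `f (1 - λ b) = 1`. Since `f` has constant coefficient `1`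
it is a unit of `A⟦λ⟧`, so this right inverse is also a left inverse.
-/

open PowerSeries

def IsRotaBaxter {k B : Type*} [Ring B] [SMul k B] (θ : k) (P : B → B) : Prop :=
  ∀ a b : B, P a * P b = P (P a * b + a * P b - θ • (a * b))

def IsCoeffwiseExt {A : Type*} [Semiring A] (R : A → A) (P : A⟦X⟧ → A⟦X⟧) : Prop :=
  ∀ (F : A⟦X⟧) (n : ℕ), coeff n (P F) = R (coeff n F)

section Atkinson

variable {k B : Type*} [CommSemiring k] [Ring B] [Algebra k B] {θ : k} {P : B → B}
  {t c f h : B}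

theorem IsRotaBaxter.sub_eq_mul_of_fixedPoint (hP : IsRotaBaxter θ P)
    (hsub : ∀ u v, P (u - v) = P u - P v) (ht : ∀ u, Commute t u) (hPt : ∀ u, P (t * u) = t * P u)
    (hf : f = 1 + t * P (f * c)) (hh : h = 1 + t * (θ • (c * h) - P (c * h))) :
    P (f * c) - P (c * h) = t * (P (f * c) * P (c * h)) := by
  set a := P (f * c)
  set b := P (c * h)
  have hfc : f * c = c + t * (a * c) := by
    conv_lhs => rw [hf]
    rw [add_mul, one_mul, mul_assoc]
  have hch : c * h = c + t * (θ • (c * (c * h)) - c * b) := by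
    conv_lhs => rw [hh]
    rw [mul_add, mul_one, ← mul_assoc, (ht c).symm.eq, mul_assoc, mul_sub, mul_smul_comm]
  have hdiff : f * c - c * h = t * (a * c - θ • (c * (c * h)) + c * b) := by
    rw [hfc]
    nth_rewrite 1 [hch]
    noncomm_ring
  have hexpand : a * (c * h) + f * c * b - θ • (f * c * (c * h)) =
      a * c - θ • (c * (c * h)) + c * b := by
    nth_rewrite 1 [hch]
    rw [hfc]
    simp only [mul_add, add_mul, mul_sub, smul_add, mul_smul_comm, mul_assoc]
    simp only [← mul_assoc _ t, (ht _).symm.eq]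
    simp only [mul_assoc]
    abel
  rw [← hsub, hdiff, hPt, hP, hexpand]

theorem IsRotaBaxter.mul_one_sub_eq_one (hP : IsRotaBaxter θ P)
    (hsub : ∀ u v, P (u - v) = P u - P v) (ht : ∀ u, Commute t u) (hPt : ∀ u, P (t * u) = t * P u)
    (hf : f = 1 + t * P (f * c)) (hh : h = 1 + t * (θ • (c * h) - P (c * h))) :
    f * (1 - t * P (c * h)) = 1 := by
  have key := hP.sub_eq_mul_of_fixedPoint hsub ht hPt hf hh
  set a := P (f * c)
  set b := P (c * h)
  have hta : t * a * (t * b) = t * (t * (a * b)) := by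
    rw [mul_assoc, ← mul_assoc a, ← (ht a).eq, mul_assoc]
  calc f * (1 - t * b) = 1 + t * (a - b) - t * a * (t * b) := by
        rw [hf]
        noncomm_ring
    _ = 1 := by rw [hta, key, add_sub_cancel_right]

end Atkinson

namespace IsCoeffwiseExt

variable {k A : Type*} [Semiring k] [Ring A] [Module k A] {R : A →+ A}
  {P : A⟦X⟧ → A⟦X⟧}

theorem map_sub (hP : IsCoeffwiseExt R P) (F G : A⟦X⟧) : P (F - G) = P F - P G := by
  ext n
  rw [_root_.map_sub, hP, hP, hP, _root_.map_sub, _root_.map_sub]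

theorem map_X_mul (hP : IsCoeffwiseExt R P) (F : A⟦X⟧) : P (X * F) = X * P F := by
  ext n
  cases n with
  | zero => rw [hP, coeff_zero_X_mul, coeff_zero_X_mul, map_zero]
  | succ n => rw [hP, coeff_succ_X_mul, coeff_succ_X_mul, hP]

theorem isRotaBaxter {θ : k} (hP : IsCoeffwiseExt R P) (hR : IsRotaBaxter θ R) :
    IsRotaBaxter θ P := by
  intro F G
  ext n
  rw [hP, _root_.map_sub, map_add, coeff_smul, coeff_mul, coeff_mul, coeff_mul, coeff_mul,
    Finset.smul_sum, ← Finset.sum_add_distrib, ← Finset.sum_sub_distrib, map_sum]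
  exact Finset.sum_congr rfl fun _ _ => by rw [hP, hP, hR]

theorem eq_smul_sub {θ : k} (hP : IsCoeffwiseExt R P) {Q : A⟦X⟧ → A⟦X⟧}
    (hQ : IsCoeffwiseExt (fun a => θ • a - R a) Q) (F : A⟦X⟧) : Q F = θ • F - P F := by
  ext n
  rw [hQ, _root_.map_sub, coeff_smul, hP]

end IsCoeffwiseExt

theorem PowerSeries.mul_eq_one_symm {A : Type*} [Ring A] {f g : A⟦X⟧}
    (hf : constantCoeff f = 1) (hfg : f * g = 1) : g * f = 1 := by
  obtain ⟨u, rfl⟩ := isUnit_iff_constantCoeff.mpr (hf ▸ isUnit_one)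
  rw [← u.mul_eq_one_iff_inv_eq.mp hfg, u.inv_mul]

theorem atkinson_inverse_general {k A : Type*} [Field k] [Ring A] [Algebra k A]
    (θ : k) (R : A →ₗ[k] A)
    (hR : ∀ a b : A, R a * R b = R (R a * b + a * R b - θ • (a * b)))
    (Rext Rtext : PowerSeries A → PowerSeries A)
    (hRext : ∀ (F : PowerSeries A) (n : ℕ),
      PowerSeries.coeff n (Rext F) = R (PowerSeries.coeff n F))
    (hRtext : ∀ (F : PowerSeries A) (n : ℕ),
      PowerSeries.coeff n (Rtext F) =
        θ • PowerSeries.coeff n F - R (PowerSeries.coeff n F))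
    (x : A) (f h : PowerSeries A)
    (hf : f = 1 + PowerSeries.X * Rext (f * PowerSeries.C x))
    (hh : h = 1 + PowerSeries.X * Rtext (PowerSeries.C x * h)) :
    f * (1 - PowerSeries.X * Rext (PowerSeries.C x * h)) = 1 ∧
    (1 - PowerSeries.X * Rext (PowerSeries.C x * h)) * f = 1 := by
  have hext : IsCoeffwiseExt R.toAddMonoidHom Rext := hRext
  have htext : IsCoeffwiseExt (fun a => θ • a - R.toAddMonoidHom a) Rtext := hRtext
  rw [hext.eq_smul_sub htext] at hh
  have hright := (hext.isRotaBaxter hR).mul_one_sub_eq_one hext.map_sub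
    (fun u => (commute_X u).symm) hext.map_X_mul hf hh
  have hf0 : constantCoeff f = 1 := by
    rw [hf]
    simp
  exact ⟨hright, mul_eq_one_symm hf0 hright⟩

theorem atkinson_inverse {k A : Type*} [Field k] [CharZero k] [Ring A] [Algebra k A]
    (θ : k) (R : A →ₗ[k] A)
    (hR : ∀ a b : A, R a * R b = R (R a * b + a * R b - θ • (a * b)))
    (Rext Rtext : PowerSeries A → PowerSeries A)
    (hRext : ∀ (F : PowerSeries A) (n : ℕ),
      PowerSeries.coeff n (Rext F) = R (PowerSeries.coeff n F))
    (hRtext : ∀ (F : PowerSeries A) (n : ℕ),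
      PowerSeries.coeff n (Rtext F) =
        θ • PowerSeries.coeff n F - R (PowerSeries.coeff n F))
    (x : A) (f h : PowerSeries A)
    (hf : f = 1 + PowerSeries.X * Rext (f * PowerSeries.C x))
    (hh : h = 1 + PowerSeries.X * Rtext (PowerSeries.C x * h)) :
    f * (1 - PowerSeries.X * Rext (PowerSeries.C x * h)) = 1 ∧
    (1 - PowerSeries.X * Rext (PowerSeries.C x * h)) * f = 1 :=
  atkinson_inverse_general θ R hR Rext Rtext hRext hRtext x f h hf hh
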